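/- Let P := {x ∈ ℝⁿ_+ : Ax ≤ b} be a packing polyhedron with exactly two non-trivial constraints (A ∈ ℝ^{2×n} with A_{ij} ≥ 0, b ∈ ℝ²_+, rational data) satisfying A_{ij} ≤ b_i for all i ∈ [2], j ∈ [n]. Then P ⊆ 3·P^I, where P^I := conv(P ∩ ℤⁿ). -/

import Mathlib

/-!
If a point `x` of a packing polyhedron `P = {x ≥ 0 : Ax ≤ b}` with `m` rows has more than `m`
fractional coordinates, some nonzero `d` with `Ad = 0` is supported on them. Moving from `x`
along `±d` until a first coordinate becomes integral stays in `P` (`Ax` does not change and no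
coordinate drops below its floor), so `x` lies on a segment between two points of `P` with fewer
fractional coordinates. Hence `P` is the convex hull of its points with at most `m` fractional
coordinates. Such a point is `⌊x⌋ + ∑ⱼ fract(xⱼ) eⱼ`, of total weight at most `m + 1`, and
`⌊x⌋`, the `eⱼ` and `0` are integral points of `P` because `P` is down-closed and
`A_{ij} ≤ bᵢ`. So `P ⊆ (m + 1) • P^I`.
-/

open scoped Pointwise

/-- The packing polyhedron `P = {x ≥ 0 : Ax ≤ b}` with two non-trivial constraints. -/
def twoRowPackPoly {n : ℕ} (A : Matrix (Fin 2) (Fin n) ℚ) (b : Fin 2 → ℚ) :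
    Set (Fin n → ℝ) :=
  {x | (∀ j, 0 ≤ x j) ∧ ∀ i : Fin 2, ∑ j, (A i j : ℝ) * x j ≤ (b i : ℝ)}

open Matrix

lemma Matrix.exists_ne_zero_mulVec_eq_zero_of_card_lt {K ι κ : Type*} [Field K] [Fintype ι]
    [Fintype κ] (A : Matrix κ ι K) {s : Finset ι} (hs : Fintype.card κ < s.card) :
    ∃ d : ι → K, d ≠ 0 ∧ A *ᵥ d = 0 ∧ ∀ j ∉ s, d j = 0 := by
  classical
  let f := A.mulVecLin.prod (LinearMap.funLeft K K ((↑) : (sᶜ : Finset ι) → ι))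
  have hker : LinearMap.ker f ≠ ⊥ := LinearMap.ker_ne_bot_of_finrank_lt <| by
    simp only [Module.finrank_prod, Module.finrank_fintype_fun_eq_card, Finset.mem_compl,
      Fintype.card_subtype_compl, Fintype.card_coe]
    have := s.card_le_univ
    omega
  obtain ⟨d, hd, hd0⟩ := (Submodule.ne_bot_iff _).1 hker
  rw [LinearMap.mem_ker, LinearMap.prod_apply, Prod.mk_eq_zero] at hd
  exact ⟨d, hd0, hd.1, fun j hj => congr_fun hd.2 ⟨j, Finset.mem_compl.2 hj⟩⟩

/-- The first `t > 0` at which `a + t * d` is an integer, when `a ∉ ℤ` and `d ≠ 0`. -/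
noncomputable def intHittingTime (a d : ℝ) : ℝ :=
  (((if 0 < d then ⌈a⌉ else ⌊a⌋ : ℤ) : ℝ) - a) / d

section IntHittingTime

variable {a d t : ℝ}

lemma intHittingTime_pos (ha : Int.fract a ≠ 0) (hd : d ≠ 0) : 0 < intHittingTime a d := by
  have hfract : 0 < Int.fract a := (Int.fract_nonneg a).lt_of_ne' ha
  unfold intHittingTime
  rcases hd.lt_or_gt with hd | hd
  · rw [if_neg hd.not_gt]
    refine div_pos_of_neg_of_neg ?_ hd
    linarith [Int.self_sub_floor a]
  · rw [if_pos hd]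
    refine div_pos ?_ hd
    have hceil := (Int.fract_eq_zero_or_add_one_sub_ceil a).resolve_left ha
    linarith [Int.fract_lt_one a]

lemma floor_le_add_mul_of_le_intHittingTime (ht₀ : 0 ≤ t) (ht : t ≤ intHittingTime a d) :
    (⌊a⌋ : ℝ) ≤ a + t * d := by
  unfold intHittingTime at ht
  rcases lt_trichotomy d 0 with hd | rfl | hd
  · rw [if_neg hd.not_gt, le_div_iff_of_neg hd] at ht
    linarith
  · simp [Int.floor_le]
  · nlinarith [Int.floor_le a]

lemma fract_add_intHittingTime_mul (hd : d ≠ 0) :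
    Int.fract (a + intHittingTime a d * d) = 0 := by
  rw [intHittingTime, div_mul_cancel₀ _ hd, add_sub_cancel, Int.fract_intCast]

end IntHittingTime

section PackingPolyhedron

variable {ι κ : Type*} [Fintype ι]

def packingPolyhedron (A : Matrix κ ι ℝ) (b : κ → ℝ) : Set (ι → ℝ) :=
  {x | 0 ≤ x ∧ A *ᵥ x ≤ b}

def integerHull (P : Set (ι → ℝ)) : Set (ι → ℝ) :=
  convexHull ℝ {x ∈ P | ∀ j, ∃ z : ℤ, x j = z}

noncomputable def fractionalSupport (x : ι → ℝ) : Finset ι :=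
  {j | Int.fract (x j) ≠ 0}

lemma mem_fractionalSupport {x : ι → ℝ} {j : ι} :
    j ∈ fractionalSupport x ↔ Int.fract (x j) ≠ 0 := by
  simp [fractionalSupport]

lemma sum_fract_le_card_fractionalSupport (x : ι → ℝ) :
    ∑ j, Int.fract (x j) ≤ (fractionalSupport x).card := by
  rw [← Finset.sum_subset (Finset.subset_univ _)
    fun j _ hj => not_not.1 (mt mem_fractionalSupport.2 hj)]
  simpa using Finset.sum_le_sum fun j (_ : j ∈ fractionalSupport x) =>
    (Int.fract_lt_one (x j)).le

lemma exists_pos_fractionalSupport_add_smul_ssubset {x d : ι → ℝ} (hd : d ≠ 0)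
    (hsupp : ∀ j, d j ≠ 0 → j ∈ fractionalSupport x) :
    ∃ t > 0, (∀ j, (⌊x j⌋ : ℝ) ≤ x j + t * d j) ∧
      fractionalSupport (x + t • d) ⊂ fractionalSupport x := by
  classical
  let K : Finset ι := {j | d j ≠ 0}
  have hK : K.Nonempty := by
    obtain ⟨j, hj⟩ := Function.ne_iff.1 hd
    exact ⟨j, by simpa [K] using hj⟩
  obtain ⟨k, hkK, hk⟩ := K.exists_min_image (fun j => intHittingTime (x j) (d j)) hK
  have hkd : d k ≠ 0 := (Finset.mem_filter.1 hkK).2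
  have ht := intHittingTime_pos (mem_fractionalSupport.1 (hsupp k hkd)) hkd
  refine ⟨_, ht, fun j => ?_,
    (Finset.ssubset_iff_of_subset fun j hj => ?_).2 ⟨k, hsupp k hkd, ?_⟩⟩
  · by_cases hdj : d j = 0
    · simp [hdj, Int.floor_le]
    · exact floor_le_add_mul_of_le_intHittingTime ht.le (hk j (by simpa [K] using hdj))
  · by_cases hdj : d j = 0
    · simpa [mem_fractionalSupport, hdj] using hj
    · exact hsupp j hdj
  · simpa [mem_fractionalSupport] using fract_add_intHittingTime_mul hkd

variable {A : Matrix κ ι ℝ} {b : κ → ℝ}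

lemma add_smul_mem_packingPolyhedron {x d : ι → ℝ} {t : ℝ}
    (hx : x ∈ packingPolyhedron A b) (hd : A *ᵥ d = 0) (hfloor : ∀ j, (⌊x j⌋ : ℝ) ≤ x j + t * d j) :
    x + t • d ∈ packingPolyhedron A b := by
  refine ⟨fun j => ?_, ?_⟩
  · have : (0 : ℝ) ≤ ⌊x j⌋ := by exact_mod_cast Int.floor_nonneg.2 (hx.1 j)
    simpa using this.trans (hfloor j)
  · simpa [mulVec_add, mulVec_smul, hd] using hx.2

lemma exists_mem_segment_card_fractionalSupport_lt [Fintype κ] {x : ι → ℝ}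
    (hx : x ∈ packingPolyhedron A b) (hcard : Fintype.card κ < (fractionalSupport x).card) :
    ∃ y ∈ packingPolyhedron A b, ∃ z ∈ packingPolyhedron A b,
      (fractionalSupport y).card < (fractionalSupport x).card ∧
      (fractionalSupport z).card < (fractionalSupport x).card ∧ x ∈ segment ℝ y z := by
  obtain ⟨d, hd0, hAd, hds⟩ := A.exists_ne_zero_mulVec_eq_zero_of_card_lt hcard
  have hsupp : ∀ j, d j ≠ 0 → j ∈ fractionalSupport x := fun j => not_imp_comm.1 (hds j)
  obtain ⟨t₁, ht₁, hfloor₁, hss₁⟩ := exists_pos_fractionalSupport_add_smul_ssubset hd0 hsupp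
  obtain ⟨t₂, ht₂, hfloor₂, hss₂⟩ := exists_pos_fractionalSupport_add_smul_ssubset
    (neg_ne_zero.2 hd0) fun j hj => hsupp j (neg_ne_zero.1 hj)
  refine ⟨_, add_smul_mem_packingPolyhedron hx hAd hfloor₁, _,
    add_smul_mem_packingPolyhedron hx (by rw [mulVec_neg, hAd, neg_zero]) hfloor₂,
    Finset.card_lt_card hss₁, Finset.card_lt_card hss₂,
    t₂ / (t₁ + t₂), t₁ / (t₁ + t₂), by positivity, by positivity, by field_simp; ring,
    ?_⟩
  ext j
  simp only [Pi.add_apply, Pi.smul_apply, Pi.neg_apply, smul_eq_mul]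
  field_simp
  ring

theorem packingPolyhedron_subset_convexHull_card_fractionalSupport_le [Fintype κ] :
    packingPolyhedron A b ⊆ convexHull ℝ
      {y ∈ packingPolyhedron A b | (fractionalSupport y).card ≤ Fintype.card κ} := by
  intro x hx
  induction hN : (fractionalSupport x).card using Nat.strong_induction_on
    generalizing x with
  | _ N ih =>
  by_cases hle : N ≤ Fintype.card κ
  · exact subset_convexHull ℝ _ ⟨hx, hN ▸ hle⟩
  · obtain ⟨y, hy, z, hz, hyx, hzx, hxyz⟩ :=
      exists_mem_segment_card_fractionalSupport_lt hx (hN ▸ not_le.1 hle)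
    exact (convex_convexHull ℝ _).segment_subset (ih _ (hN ▸ hyx) hy rfl)
      (ih _ (hN ▸ hzx) hz rfl) hxyz

lemma mem_packingPolyhedron_of_le (hA : ∀ i j, 0 ≤ A i j) {x y : ι → ℝ}
    (hx : x ∈ packingPolyhedron A b) (hy : 0 ≤ y) (hyx : y ≤ x) : y ∈ packingPolyhedron A b :=
  ⟨hy, fun i => le_trans
    (Finset.sum_le_sum fun j _ => mul_le_mul_of_nonneg_left (hyx j) (hA i j)) (hx.2 i)⟩

lemma single_one_mem_packingPolyhedron [DecidableEq ι] (hAb : ∀ i j, A i j ≤ b i) (j : ι) :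
    Pi.single j 1 ∈ packingPolyhedron A b :=
  ⟨Pi.single_nonneg.2 zero_le_one, by rw [mulVec_single_one]; exact fun i => hAb i j⟩

lemma mem_smul_integerHull_of_card_fractionalSupport_le (hA : ∀ i j, 0 ≤ A i j)
    (hAb : ∀ i j, A i j ≤ b i) {x : ι → ℝ} (hx : x ∈ packingPolyhedron A b) {m : ℕ}
    (hm : (fractionalSupport x).card ≤ m) :
    x ∈ ((m : ℝ) + 1) • integerHull (packingPolyhedron A b) := by
  classical
  -- `x` is the sum of `⌊x⌋` and the `fract (x j) • e_j`
  let w : Option ι → ℝ := fun o => o.elim 1 fun j => Int.fract (x j)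
  let z : Option ι → ι → ℝ := fun o => o.elim (fun j => ⌊x j⌋) fun j => Pi.single j 1
  have hw : ∀ o, 0 ≤ w o := fun o => o.rec zero_le_one fun j => Int.fract_nonneg (x j)
  have hW : ∑ o, w o = 1 + ∑ j, Int.fract (x j) := Fintype.sum_option w
  have hWpos : 0 < ∑ o, w o := by
    rw [hW]
    positivity
  have hWm : ∑ o, w o ≤ m + 1 := by
    linarith [sum_fract_le_card_fractionalSupport x, (Nat.cast_le (α := ℝ)).2 hm]
  have hwz : ∑ o, w o • z o = x := by
    ext j
    simp [w, z, Fintype.sum_option, Finset.sum_apply, Pi.single_apply, Int.floor_add_fract]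
  have hz : ∀ o, z o ∈ {y ∈ packingPolyhedron A b | ∀ j, ∃ k : ℤ, y j = k} := by
    rintro (_ | j)
    · refine ⟨mem_packingPolyhedron_of_le hA hx (fun j => ?_) fun j => Int.floor_le _,
        fun j => ⟨_, rfl⟩⟩
      exact Int.cast_nonneg (Int.floor_nonneg.2 (hx.1 j))
    · refine ⟨single_one_mem_packingPolyhedron hAb j,
        fun k => ⟨if k = j then 1 else 0, ?_⟩⟩
      by_cases hk : k = j <;> simp [z, hk]
  have h0 : (0 : ι → ℝ) ∈ integerHull (packingPolyhedron A b) :=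
    subset_convexHull ℝ _
      ⟨mem_packingPolyhedron_of_le hA hx le_rfl hx.1, fun j => ⟨0, by simp⟩⟩
  have hcenter : Finset.univ.centerMass w z ∈ integerHull (packingPolyhedron A b) :=
    Finset.centerMass_mem_convexHull _ (fun o _ => hw o) hWpos fun o _ => hz o
  rw [Set.mem_smul_set_iff_inv_smul_mem₀ (by positivity)]
  have hx' :
      ((m : ℝ) + 1)⁻¹ • x = ((∑ o, w o) / (m + 1)) • Finset.univ.centerMass w z := by
    rw [Finset.centerMass, hwz, smul_smul]
    field_simp
  rw [hx']
  exact (convex_convexHull ℝ _).smul_mem_of_zero_mem h0 hcenter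
    ⟨by positivity, div_le_one_of_le₀ hWm (by positivity)⟩

theorem packingPolyhedron_subset_smul_integerHull [Fintype κ] (hA : ∀ i j, 0 ≤ A i j)
    (hAb : ∀ i j, A i j ≤ b i) :
    packingPolyhedron A b ⊆
      ((Fintype.card κ : ℝ) + 1) • integerHull (packingPolyhedron A b) :=
  packingPolyhedron_subset_convexHull_card_fractionalSupport_le.trans <|
    convexHull_min
      (fun _ hy => mem_smul_integerHull_of_card_fractionalSupport_le hA hAb hy.1 hy.2)
      ((convex_convexHull ℝ _).smul _)

end PackingPolyhedron

theorem twoRowPacking_subset_three_smul_integerHull_general {n : ℕ}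
    (A : Matrix (Fin 2) (Fin n) ℚ) (b : Fin 2 → ℚ)
    (hA : ∀ i j, 0 ≤ A i j) (hAb : ∀ i j, A i j ≤ b i) :
    twoRowPackPoly A b ⊆
      (3 : ℝ) • convexHull ℝ {x ∈ twoRowPackPoly A b | ∀ j, ∃ z : ℤ, x j = (z : ℝ)} := by
  have h := packingPolyhedron_subset_smul_integerHull (A := A.map ((↑) : ℚ → ℝ))
    (b := fun i => (b i : ℝ)) (fun i j => Rat.cast_nonneg.2 (hA i j))
    (fun i j => Rat.cast_le.2 (hAb i j))
  norm_num at h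
  exact h

/-- A packing polyhedron with exactly two non-trivial constraints and
rational data (`0 ≤ A_{ij}`, `0 ≤ b_i`, `A_{ij} ≤ b_i`) satisfies `P ⊆ 3 · P^I`, where
`P^I = conv(P ∩ ℤⁿ)`. -/
theorem twoRowPacking_subset_three_smul_integerHull {n : ℕ} (hn : 0 < n)
    (A : Matrix (Fin 2) (Fin n) ℚ) (b : Fin 2 → ℚ)
    (hA : ∀ i j, 0 ≤ A i j) (hb : ∀ i, 0 ≤ b i) (hAb : ∀ i j, A i j ≤ b i) :
    twoRowPackPoly A b ⊆
      (3 : ℝ) • convexHull ℝ {x ∈ twoRowPackPoly A b | ∀ j, ∃ z : ℤ, x j = (z : ℝ)} :=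
  twoRowPacking_subset_three_smul_integerHull_general A b hA hAb
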